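/- arXiv:2311.14781 — 2 statements merged into one kernel-verified Lean document; each statement's English description precedes it below -/
import Mathlib

section
/- There exists an absolute constant c > 0 such that the following holds. Let k ≥ 1 be an integer, let N be an even integer with N ≥ 4k, let A = {a_1 < a_2 < ⋯ < a_N} be a set of N real numbers, and let A' = {a_1 < a_2 < ⋯ < a_{N/2}} consist of the first N/2 elements of A. Then |(2k+1)(A−A)^2 − 2k(A−A)^2| ≥ c · |A| |kA' − kA'| / k. -/
open Finset Pointwise

/-- `distSet d A` is the set of Euclidean distances `Δ(A^d)` determined by the
`d`-fold Cartesian power `A^d ⊂ ℝ^d`. -/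
noncomputable def distSet (d : ℕ) (A : Finset ℝ) : Finset ℝ :=
  ((Fintype.piFinset fun _ : Fin d => A) ×ˢ (Fintype.piFinset fun _ : Fin d => A)).image
    fun pq => @dist (EuclideanSpace ℝ (Fin d)) _ (WithLp.toLp 2 pq.1) (WithLp.toLp 2 pq.2)

/-- `iterSum k S` is the `k`-fold iterated sumset `kS = S + ⋯ + S` (for `k ≥ 1`). -/
noncomputable def iterSum : ℕ → Finset ℝ → Finset ℝ
  | 0, _ => {0}
  | n + 1, S => iterSum n S + S

/-! For `u < v` in `A` and `b ∈ A'`, the difference `(u - b)^2 - (v - b)^2` equals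
`2(v - u) b + (u^2 - v^2)`, which is affine in `b`; summing `k` such differences shows that
`2(v - u) • (kA' - kA')` lies in `2k(A - A)^2 - 2k(A - A)^2`. Take `v - u = δ`, the smallest gap
between consecutive elements of the upper half of `A`, and let `x = a_i - a_1` run through every
`2k`-th element of the upper half. Consecutive values of `x` differ by at least `2kδ`, and every
`x` exceeds `a_{N/2} - a_1 ≥ |s| / k` for all `s ∈ kA' - kA'`. Hence the translates
`x^2 + 2δ(kA' - kA')` are pairwise disjoint, and at least `N/(8k)` of them lie inside
`(2k+1)(A - A)^2 - 2k(A - A)^2`. -/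

lemma iterSum_eq_nsmul (n : ℕ) (S : Finset ℝ) : iterSum n S = n • S := by
  induction n with
  | zero => rfl
  | succ n ih => rw [iterSum, ih, succ_nsmul]

section Lifting

variable {R : Type*} [CommRing R] [DecidableEq R] {B S : Finset R} {c e : R}

lemma mul_add_mem_nsmul_sub (h : ∀ b ∈ B, c * b + e ∈ S - S) :
    ∀ (m : ℕ), ∀ σ ∈ m • B, c * σ + m * e ∈ m • (S - S) := by
  intro m
  induction m with
  | zero => simp
  | succ m ih =>
    intro σ hσ
    rw [succ_nsmul] at hσ ⊢
    obtain ⟨τ, hτ, b, hb, rfl⟩ := mem_add.1 hσ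
    convert add_mem_add (ih τ hτ) (h b hb) using 1
    push_cast
    ring

lemma mul_mem_nsmul_sub_nsmul (h : ∀ b ∈ B, c * b + e ∈ S - S) {m : ℕ} {s : R}
    (hs : s ∈ m • B - m • B) : c * s ∈ (2 * m) • S - (2 * m) • S := by
  obtain ⟨σ, hσ, τ, hτ, rfl⟩ := mem_sub.1 hs
  have hmem := sub_mem_sub (mul_add_mem_nsmul_sub h m σ hσ) (mul_add_mem_nsmul_sub h m τ hτ)
  rw [← nsmul_sub, sub_sub_sub_eq, nsmul_sub, nsmul_add, ← add_nsmul, ← two_mul] at hmem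
  convert hmem using 1
  ring

end Lifting

lemma abs_le_nsmul_of_mem_nsmul_sub_nsmul {α : Type*} [AddCommGroup α] [LinearOrder α]
    [IsOrderedAddMonoid α] [DecidableEq α] {B : Finset α} {lo hi : α}
    (hB : ∀ b ∈ B, lo ≤ b ∧ b ≤ hi) {m : ℕ} {s : α} (hs : s ∈ m • B - m • B) :
    |s| ≤ m • (hi - lo) := by
  have hbounds : ∀ m : ℕ, ∀ σ ∈ m • B, m • lo ≤ σ ∧ σ ≤ m • hi := by
    intro m
    induction m with
    | zero => simp
    | succ m ih =>
      intro σ hσ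
      rw [succ_nsmul] at hσ
      obtain ⟨τ, hτ, b, hb, rfl⟩ := mem_add.1 hσ
      simp only [succ_nsmul]
      exact ⟨add_le_add (ih τ hτ).1 (hB b hb).1, add_le_add (ih τ hτ).2 (hB b hb).2⟩
  obtain ⟨σ, hσ, τ, hτ, rfl⟩ := mem_sub.1 hs
  obtain ⟨hσlo, hσhi⟩ := hbounds m σ hσ
  obtain ⟨hτlo, hτhi⟩ := hbounds m τ hτ
  rw [nsmul_sub, abs_sub_le_iff]
  exact ⟨sub_le_sub hσhi hτlo, sub_le_sub hτhi hσlo⟩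

section OrderedField

variable {K : Type*} [Field K] [LinearOrder K] [IsStrictOrderedRing K]

lemma exists_gap_mul_le_sub (a : ℕ → K) {p q : ℕ} (hpq : p < q) :
    ∃ n, p ≤ n ∧ n < q ∧ ∀ i j, p ≤ i → i ≤ j → j ≤ q →
      ((j : K) - i) * (a (n + 1) - a n) ≤ a j - a i := by
  obtain ⟨n, hn, hmin⟩ :=
    exists_min_image (Ico p q) (fun n => a (n + 1) - a n) (nonempty_Ico.2 hpq)
  rw [mem_Ico] at hn
  refine ⟨n, hn.1, hn.2, fun i j hi hij hj => ?_⟩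
  obtain ⟨d, rfl⟩ := Nat.exists_eq_add_of_le hij
  induction d with
  | zero => simp
  | succ d ih =>
    have hstep := hmin (i + d) (mem_Ico.2 ⟨by omega, by omega⟩)
    have hprev := ih (by omega) (by omega)
    rw [← add_assoc]
    push_cast at hstep hprev ⊢
    linarith

lemma injOn_sq_add_mul {x : ℕ → K} {P : Finset K} {M : ℕ} {L D R ε : K}
    (hL : 0 ≤ L) (hD : 0 < D) (hε : 0 < ε) (hRL : ε * R ≤ L * D)
    (hP : ∀ s ∈ P, |s| ≤ R) (hx : ∀ j < M, L < x j)
    (hsep : ∀ i j, i < j → j < M → x i + D ≤ x j) :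
    Set.InjOn (fun p : ℕ × K => x p.1 ^ 2 + ε * p.2) (range M ×ˢ P : Finset (ℕ × K)) := by
  have hlt : ∀ i j s t, i < j → j < M → s ∈ P → t ∈ P →
      x i ^ 2 + ε * s < x j ^ 2 + ε * t := by
    intro i j s t hij hj hs ht
    have hxi := hx i (hij.trans hj)
    have hxj := hx j hj
    have hs' := abs_le.1 (hP s hs)
    have ht' := abs_le.1 (hP t ht)
    have : ε * (s - t) < (x j - x i) * (x j + x i) := calc
      ε * (s - t) ≤ 2 * (ε * R) := by nlinarith
      _ ≤ 2 * (L * D) := by linarith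
      _ < D * (x j + x i) := by nlinarith
      _ ≤ (x j - x i) * (x j + x i) := by nlinarith [hsep i j hij hj]
    linarith
  rintro ⟨i, s⟩ hi ⟨j, t⟩ hj hij
  simp only [coe_product, Set.mem_prod, mem_coe, mem_range] at hi hj hij
  rcases lt_trichotomy i j with h | rfl | h
  · exact absurd hij (hlt i j s t h hj.1 hi.2 hj.2).ne
  · rw [add_right_inj, mul_right_inj' hε.ne'] at hij
    rw [hij]
  · exact absurd hij (hlt j i t s h hi.1 hj.2 hi.2).ne'

theorem card_mul_card_nsmul_sub_le [DecidableEq K] {B S : Finset K} {u v lo hi : K} {x : ℕ → K}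
    {m M : ℕ} (hm : 0 < m) (huv : u < v) (hlo : lo ≤ hi)
    (hB : ∀ b ∈ B, lo ≤ b ∧ b ≤ hi)
    (hu : ∀ b ∈ B, (u - b) ^ 2 ∈ S) (hv : ∀ b ∈ B, (v - b) ^ 2 ∈ S)
    (hxS : ∀ j < M, x j ^ 2 ∈ S) (hx : ∀ j < M, hi - lo < x j)
    (hsep : ∀ i j, i < j → j < M → x i + 2 * m * (v - u) ≤ x j) :
    M * #(m • B - m • B) ≤ #((2 * m + 1) • S - (2 * m) • S) := by
  have hlift : ∀ b ∈ B, 2 * (v - u) * b + (u ^ 2 - v ^ 2) ∈ S - S := fun b hb => by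
    convert sub_mem_sub (hu b hb) (hv b hb) using 1
    ring
  rw [← card_range M, ← card_product]
  refine card_le_card_of_injOn (fun p => x p.1 ^ 2 + 2 * (v - u) * p.2) ?_ ?_
  · rintro ⟨j, s⟩ h
    simp only [coe_product, Set.mem_prod, mem_coe, mem_range] at h
    obtain ⟨F, hF, G, hG, hFG⟩ := mem_sub.1 (mul_mem_nsmul_sub_nsmul hlift h.2)
    refine mem_sub.2 ⟨F + x j ^ 2, ?_, G, hG, ?_⟩
    · rw [succ_nsmul]
      exact add_mem_add hF (hxS j h.1)
    · linear_combination hFG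
  · refine injOn_sq_add_mul (R := m * (hi - lo)) (sub_nonneg.2 hlo) (by positivity)
      (by linarith) (le_of_eq (by ring)) (fun s hs => ?_) hx hsep
    rw [← nsmul_eq_mul]
    exact abs_le_nsmul_of_mem_nsmul_sub_nsmul hB hs

theorem card_mul_card_le_of_strictMonoOn [DecidableEq K] {a : ℕ → K} {k N : ℕ} {S : Finset K}
    (hk : 0 < k) (hkN : 4 * k ≤ N) (ha : StrictMonoOn a (Set.Icc 1 N))
    (hS : ∀ i ∈ Set.Icc 1 N, ∀ j ∈ Set.Icc 1 N, (a i - a j) ^ 2 ∈ S) :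
    N / (4 * k) * #(k • (Icc 1 (N / 2)).image a - k • (Icc 1 (N / 2)).image a) ≤
      #((2 * k + 1) • S - (2 * k) • S) := by
  obtain ⟨n, hn, hnN, hgap⟩ := exists_gap_mul_le_sub a (show N / 2 + 1 < N by omega)
  have hindex_le : ∀ j < N / (4 * k), N / 2 + 1 + 2 * k * j ≤ N := fun j hj => by
    have hj' := (Nat.le_div_iff_mul_le (by positivity)).1 hj
    have : 2 * k * j + 2 * k ≤ N / 2 := by
      rw [Nat.le_div_iff_mul_le (by norm_num)]
      nlinarith
    omega
  have hδ : 0 < a (n + 1) - a n :=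
    sub_pos.2 (ha ⟨by omega, by omega⟩ ⟨by omega, by omega⟩ (by omega))
  have hsq : ∀ i ∈ Set.Icc 1 N, ∀ b ∈ (Icc 1 (N / 2)).image a, (a i - b) ^ 2 ∈ S := by
    simp only [forall_mem_image, mem_Icc]
    exact fun i hi j hj => hS i hi j ⟨hj.1, by omega⟩
  refine card_mul_card_nsmul_sub_le (u := a n) (v := a (n + 1)) (lo := a 1) (hi := a (N / 2))
    (x := fun j => a (N / 2 + 1 + 2 * k * j) - a 1) hk (by linarith)
    (ha.monotoneOn ⟨le_rfl, by omega⟩ ⟨by omega, by omega⟩ (by omega)) ?_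
    (hsq n ⟨by omega, by omega⟩) (hsq (n + 1) ⟨by omega, by omega⟩)
    (fun j hj => ?_) (fun j hj => ?_) (fun i j hij hj => ?_)
  · simp only [forall_mem_image, mem_Icc]
    exact fun i hi => ⟨ha.monotoneOn ⟨le_rfl, by omega⟩ ⟨hi.1, by omega⟩ hi.1,
      ha.monotoneOn ⟨hi.1, by omega⟩ ⟨by omega, by omega⟩ hi.2⟩
  · exact hS _ ⟨by omega, hindex_le j hj⟩ _ ⟨le_rfl, by omega⟩
  · have := ha ⟨by omega, by omega⟩ ⟨by omega, hindex_le j hj⟩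
      (show N / 2 < N / 2 + 1 + 2 * k * j by omega)
    linarith
  · have hgap_ij := hgap (N / 2 + 1 + 2 * k * i) (N / 2 + 1 + 2 * k * j) (by omega)
      (by gcongr) (hindex_le j hj)
    have hindex_gap : (2 * k : K) ≤
        ((N / 2 + 1 + 2 * k * j : ℕ) : K) - ((N / 2 + 1 + 2 * k * i : ℕ) : K) := by
      push_cast
      have : (i : K) + 1 ≤ j := by exact_mod_cast hij
      nlinarith
    nlinarith

end OrderedField

theorem stmt10 :
    ∃ c : ℝ, 0 < c ∧
      ∀ (k N : ℕ), 1 ≤ k → Even N → 4 * k ≤ N →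
        ∀ (a : ℕ → ℝ), (∀ i j : ℕ, 1 ≤ i → i < j → j ≤ N → a i < a j) →
          ∀ (A A' : Finset ℝ),
            A = (Finset.Icc 1 N).image a →
            A' = (Finset.Icc 1 (N / 2)).image a →
            ∀ S : Finset ℝ, S = (A - A).image (fun x => x ^ 2) →
              c * (A.card : ℝ) * ((iterSum k A' - iterSum k A').card : ℝ) / (k : ℝ) ≤
                ((iterSum (2 * k + 1) S - iterSum (2 * k) S).card : ℝ) := by
  refine ⟨1 / 8, by norm_num, ?_⟩
  rintro k N hk - hkN a ha A A' rfl rfl S hS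
  have hmono : StrictMonoOn a (Set.Icc 1 N) := fun i hi j hj hij => ha i j hi.1 hij hj.2
  have hcount := card_mul_card_le_of_strictMonoOn hk hkN hmono (S := S) fun i hi j hj =>
    hS ▸ mem_image_of_mem _ (sub_mem_sub (mem_image_of_mem a (mem_Icc.2 hi))
      (mem_image_of_mem a (mem_Icc.2 hj)))
  have hcardA : #((Icc 1 N).image a) = N := by
    rw [card_image_of_injOn (by rw [coe_Icc]; exact hmono.injOn), Nat.card_Icc, Nat.add_sub_cancel]
  -- `N / (4k) ≥ 1`, so rounding down loses at most a factor of 2.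
  have hN : N ≤ 8 * k * (N / (4 * k)) := by
    have h1 := Nat.lt_mul_div_succ N (show 0 < 4 * k by omega)
    have h2 := Nat.div_pos hkN (show 0 < 4 * k by omega)
    nlinarith
  simp only [iterSum_eq_nsmul, hcardA]
  set P := k • (Icc 1 (N / 2)).image a - k • (Icc 1 (N / 2)).image a
  set T := (2 * k + 1) • S - (2 * k) • S
  have hcountN : N * #P ≤ 8 * k * #T := calc
    _ ≤ 8 * k * (N / (4 * k)) * #P := by gcongr
    _ = 8 * k * (N / (4 * k) * #P) := by ring
    _ ≤ 8 * k * #T := by gcongr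
  have hcountR : (N : ℝ) * #P ≤ 8 * k * #T := by exact_mod_cast hcountN
  rw [div_le_iff₀ (by exact_mod_cast hk)]
  linarith
end

section
/- There exists an absolute constant c > 0 such that the following holds. Let k ≥ 1 be an integer, let N be an even integer with N ≥ 4k, let X = {x_1 < x_2 < ⋯ < x_N} be a set of N real numbers with x_1 > 0, and let X' = {x_1 < x_2 < ⋯ < x_{N/2}} consist of the first N/2 elements of X. Then there exist x, x' ∈ X such that |{x}((k+1)X − kX) + {x'}(kX − kX)| ≥ c · |X| |kX' − kX'| / k. -/
open Finset Pointwise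

/-!
Let `X'` be the lower half of `X`, so that `D = kX' - kX'` lies in `[-k h, k h]` with
`h = max X'`, and let `x' < x` be the two closest elements of the upper half `P`, at distance
`δ = x - x'`. For `p ∈ P` and `d ∈ D` the number `x p + δ d = x (p + d) + x' (-d)` lies in
`x((k+1)X - kX) + x'(kX - kX)`. Cutting `[-k x, k x)` into `2k` windows of length `x > h`, some
window `W` holds at least `|D| / (2k)` elements of `D`, and `(p, d) ↦ x p + δ d` is injective on
`P × W`: the `x p` are `x δ`-separated, while `δ d` varies by less than `δ x` on `W`. Hence the
sumset has at least `|P| |D| / (2k) = |X| |D| / (4k)` elements.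
-/

lemma iterSum_mono {S T : Finset ℝ} (h : S ⊆ T) : ∀ n, iterSum n S ⊆ iterSum n T
  | 0 => subset_rfl
  | n + 1 => add_subset_add (iterSum_mono h n) h

lemma add_mem_iterSum_succ {S : Finset ℝ} {n : ℕ} {a s : ℝ} (ha : a ∈ S) (hs : s ∈ iterSum n S) :
    a + s ∈ iterSum (n + 1) S := by
  rw [add_comm a s]
  exact add_mem_add hs ha

lemma coe_iterSum_subset_Icc {S : Finset ℝ} {lo hi : ℝ} (hS : (S : Set ℝ) ⊆ Set.Icc lo hi) :
    ∀ n : ℕ, (iterSum n S : Set ℝ) ⊆ Set.Icc (n * lo) (n * hi)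
  | 0 => by simp [iterSum]
  | n + 1 => by
      rw [iterSum, coe_add, Nat.cast_succ, add_one_mul, add_one_mul]
      exact (Set.add_subset_add (coe_iterSum_subset_Icc hS n) hS).trans (Set.Icc_add_Icc_subset ..)

lemma coe_iterSum_sub_iterSum_subset_Icc {S : Finset ℝ} {lo hi : ℝ}
    (hS : (S : Set ℝ) ⊆ Set.Icc lo hi) (n : ℕ) :
    ((iterSum n S - iterSum n S : Finset ℝ) : Set ℝ) ⊆
      Set.Icc (n * lo - n * hi) (n * hi - n * lo) := by
  rw [coe_sub]
  rintro _ ⟨s, hs, u, hu, rfl⟩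
  obtain ⟨hs₁, hs₂⟩ := coe_iterSum_subset_Icc hS n hs
  obtain ⟨hu₁, hu₂⟩ := coe_iterSum_subset_Icc hS n hu
  constructor <;> linarith

lemma card_image_Icc {β : Type*} [DecidableEq β] {f : ℕ → β} {m n : ℕ}
    (hf : Set.InjOn f (Set.Icc m n)) : ((Icc m n).image f).card = n + 1 - m := by
  rw [card_image_of_injOn (by rwa [coe_Icc]), Nat.card_Icc]

lemma exists_lt_forall_sub_le_sub {P : Finset ℝ} (hP : 1 < P.card) :
    ∃ a ∈ P, ∃ b ∈ P, a < b ∧ ∀ p ∈ P, ∀ q ∈ P, p < q → b - a ≤ q - p := by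
  obtain ⟨p, hp, q, hq, hpq⟩ := one_lt_card.1 hP
  have hne : ((P ×ˢ P).filter fun r : ℝ × ℝ => r.1 < r.2).Nonempty := by
    rcases hpq.lt_or_gt with h | h
    · exact ⟨(p, q), mem_filter.2 ⟨mem_product.2 ⟨hp, hq⟩, h⟩⟩
    · exact ⟨(q, p), mem_filter.2 ⟨mem_product.2 ⟨hq, hp⟩, h⟩⟩
  obtain ⟨⟨a, b⟩, hab, hmin⟩ := exists_min_image _ (fun r : ℝ × ℝ => r.2 - r.1) hne
  simp only [mem_filter, mem_product] at hab hmin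
  exact ⟨a, hab.1.1, b, hab.1.2, hab.2, fun p hp q hq hpq => hmin (p, q) ⟨⟨hp, hq⟩, hpq⟩⟩

lemma exists_subset_card_le_mul_of_subset_Ico {D : Finset ℝ} {a w : ℝ} {m : ℕ} (hw : 0 < w)
    (hD : (D : Set ℝ) ⊆ Set.Ico a (a + m * w)) :
    ∃ W ⊆ D, D.card ≤ m * W.card ∧ ∀ d ∈ W, ∀ e ∈ W, d - e < w := by
  rcases D.eq_empty_or_nonempty with rfl | ⟨d₀, hd₀⟩
  · exact ⟨∅, subset_rfl, by simp, by simp⟩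
  set f : ℝ → ℤ := fun d => ⌊(d - a) / w⌋
  have hf : ∀ d ∈ D, f d ∈ Ico (0 : ℤ) m := by
    intro d hd
    obtain ⟨h₁, h₂⟩ := hD hd
    rw [mem_Ico, Int.floor_nonneg, Int.floor_lt, Int.cast_natCast, div_lt_iff₀ hw]
    exact ⟨div_nonneg (by linarith) hw.le, by linarith⟩
  have hm : (m : ℝ) ≠ 0 := by
    have := hf d₀ hd₀
    rw [mem_Ico] at this
    exact_mod_cast (this.1.trans_lt this.2).ne'
  obtain ⟨t, -, ht⟩ := exists_le_card_fiber_of_nsmul_le_card_of_maps_to hf ⟨_, hf d₀ hd₀⟩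
    (b := (D.card : ℝ) / m) (by simp [nsmul_eq_mul, mul_div_cancel₀ _ hm])
  refine ⟨D.filter (f · = t), filter_subset _ _, ?_, ?_⟩
  · rw [div_le_iff₀' (by positivity)] at ht
    exact_mod_cast ht
  · intro d hd e he
    have hfe : f d = f e := (mem_filter.1 hd).2.trans (mem_filter.1 he).2.symm
    have := (le_abs_self _).trans_lt (Int.abs_sub_lt_one_of_floor_eq_floor hfe)
    rwa [← sub_div, sub_sub_sub_cancel_right, div_lt_one hw] at this

lemma injOn_mul_add_mul_of_separated {P W : Finset ℝ} {x δ w : ℝ} (hδ : 0 < δ) (hwx : w ≤ x)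
    (hP : ∀ p ∈ P, ∀ q ∈ P, p < q → δ ≤ q - p) (hW : ∀ d ∈ W, ∀ e ∈ W, d - e < w) :
    Set.InjOn (fun r : ℝ × ℝ => x * r.1 + δ * r.2) (P ×ˢ W : Finset (ℝ × ℝ)) := by
  have hlt : ∀ p ∈ P, ∀ q ∈ P, ∀ d ∈ W, ∀ e ∈ W, x * p + δ * d = x * q + δ * e → ¬ p < q := by
    intro p hp q hq d hd e he heq hpq
    have hw : 0 < w := by simpa using hW d hd d hd
    nlinarith [hP p hp q hq hpq, hW d hd e he]
  rintro ⟨p, d⟩ hpd ⟨q, e⟩ hqe heq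
  simp only [coe_product, Set.mem_prod, mem_coe] at hpd hqe heq
  have hpq : p = q := le_antisymm (not_lt.1 (hlt q hqe.1 p hpd.1 e hqe.2 d hpd.2 heq.symm))
    (not_lt.1 (hlt p hpd.1 q hqe.1 d hpd.2 e hqe.2 heq))
  subst hpq
  exact Prod.ext rfl (mul_left_cancel₀ hδ.ne' (add_left_cancel heq))

lemma mul_add_sub_mul_mem_image_add_image {A : Finset ℝ} {k : ℕ} {a d : ℝ} (x x' : ℝ)
    (ha : a ∈ A) (hd : d ∈ iterSum k A - iterSum k A) :
    x * a + (x - x') * d ∈ (iterSum (k + 1) A - iterSum k A).image (x * ·) +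
      (iterSum k A - iterSum k A).image (x' * ·) := by
  obtain ⟨s, hs, u, hu, rfl⟩ := mem_sub.1 hd
  exact mem_add.2 ⟨x * (a + s - u),
    mem_image_of_mem _ (sub_mem_sub (add_mem_iterSum_succ ha hs) hu), x' * (u - s),
    mem_image_of_mem _ (sub_mem_sub hu hs), by ring⟩

theorem card_mul_card_iterSum_sub_le {A A' P : Finset ℝ} {k : ℕ} {h : ℝ} (hk : 0 < k)
    (hh : 0 ≤ h) (hA'A : A' ⊆ A) (hPA : P ⊆ A) (hA' : (A' : Set ℝ) ⊆ Set.Icc 0 h)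
    (hP : ∀ p ∈ P, h < p) (hPcard : 1 < P.card) :
    ∃ x ∈ A, ∃ x' ∈ A, P.card * (iterSum k A' - iterSum k A').card ≤
      2 * k * ((iterSum (k + 1) A - iterSum k A).image (x * ·) +
        (iterSum k A - iterSum k A).image (x' * ·)).card := by
  obtain ⟨x', hx', x, hx, hx'x, hgap⟩ := exists_lt_forall_sub_le_sub hPcard
  have hhx : h < x := hP x hx
  have hD : ((iterSum k A' - iterSum k A' : Finset ℝ) : Set ℝ) ⊆
      Set.Ico (-(k * x)) (-(k * x) + (2 * k : ℕ) * x) := by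
    intro d hd
    obtain ⟨hd₁, hd₂⟩ := coe_iterSum_sub_iterSum_subset_Icc hA' k hd
    have : (k : ℝ) * h < k * x := mul_lt_mul_of_pos_left hhx (by exact_mod_cast hk)
    push_cast
    constructor <;> linarith
  obtain ⟨W, hWD, hcard, hW⟩ := exists_subset_card_le_mul_of_subset_Ico (by linarith) hD
  have hinj := injOn_mul_add_mul_of_separated (sub_pos.2 hx'x) le_rfl hgap hW
  have hmaps : ∀ r ∈ P ×ˢ W, (fun r : ℝ × ℝ => x * r.1 + (x - x') * r.2) r ∈
      (iterSum (k + 1) A - iterSum k A).image (x * ·) +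
        (iterSum k A - iterSum k A).image (x' * ·) := by
    intro r hr
    obtain ⟨hr₁, hr₂⟩ := mem_product.1 hr
    exact mul_add_sub_mul_mem_image_add_image x x' (hPA hr₁)
      (sub_subset_sub (iterSum_mono hA'A k) (iterSum_mono hA'A k) (hWD hr₂))
  refine ⟨x, hPA hx, x', hPA hx', ?_⟩
  calc P.card * (iterSum k A' - iterSum k A').card
      ≤ P.card * (2 * k * W.card) := Nat.mul_le_mul_left _ hcard
    _ = 2 * k * (P ×ˢ W).card := by rw [card_product]; ring
    _ ≤ _ := Nat.mul_le_mul_left _ (card_le_card_of_injOn _ hmaps hinj)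

theorem stmt12 :
    ∃ c : ℝ, 0 < c ∧
      ∀ (k N : ℕ), 1 ≤ k → Even N → 4 * k ≤ N →
        ∀ (xs : ℕ → ℝ), 0 < xs 1 → (∀ i j : ℕ, 1 ≤ i → i < j → j ≤ N → xs i < xs j) →
          ∀ (X X' : Finset ℝ),
            X = (Finset.Icc 1 N).image xs →
            X' = (Finset.Icc 1 (N / 2)).image xs →
            ∃ x ∈ X, ∃ x' ∈ X,
              c * (X.card : ℝ) * ((iterSum k X' - iterSum k X').card : ℝ) / (k : ℝ) ≤
                (((iterSum (k + 1) X - iterSum k X).image (fun y => x * y) +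
                    (iterSum k X - iterSum k X).image (fun y => x' * y)).card : ℝ) := by
  refine ⟨1 / 4, by norm_num, ?_⟩
  rintro k N hk ⟨M, rfl⟩ hN xs hxs₁ hlt X X' rfl rfl
  have hmono : StrictMonoOn xs (Set.Icc 1 (M + M)) := fun i hi j hj hij => hlt i j hi.1 hij hj.2
  rw [show (M + M) / 2 = M by omega]
  have hXcard : ((Icc 1 (M + M)).image xs).card = M + M := by
    rw [card_image_Icc hmono.injOn]; omega
  have hPcard : ((Icc (M + 1) (M + M)).image xs).card = M := by
    rw [card_image_Icc (hmono.injOn.mono (Set.Icc_subset_Icc (by omega : 1 ≤ M + 1) le_rfl))]; omega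
  have hX' : ((Icc 1 M).image xs : Set ℝ) ⊆ Set.Icc 0 (xs M) := by
    rw [coe_image, coe_Icc]
    exact ((hmono.mono (Set.Icc_subset_Icc le_rfl (by omega))).monotoneOn.image_Icc_subset).trans
      (Set.Icc_subset_Icc_left hxs₁.le)
  have hP : ∀ p ∈ (Icc (M + 1) (M + M)).image xs, xs M < p := by
    intro p hp
    obtain ⟨i, hi, rfl⟩ := mem_image.1 hp
    rw [mem_Icc] at hi
    exact hmono ⟨by omega, by omega⟩ ⟨by omega, hi.2⟩ (by omega)
  obtain ⟨x, hx, x', hx', hcard⟩ := card_mul_card_iterSum_sub_le (A := (Icc 1 (M + M)).image xs)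
    hk (hX' (mem_image_of_mem xs (mem_Icc.2 ⟨by omega, le_rfl⟩))).1
    (image_subset_image (Icc_subset_Icc le_rfl (by omega)))
    (image_subset_image (Icc_subset_Icc (by omega) le_rfl)) hX' hP (by omega)
  refine ⟨x, hx, x', hx', ?_⟩
  rw [hPcard] at hcard
  rw [hXcard, div_le_iff₀ (by positivity)]
  have hcard' := (Nat.cast_le (α := ℝ)).2 hcard
  push_cast at hcard' ⊢
  linarith
end
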